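/- Let g : [0,∞) → ℝ be a monotonically increasing concave function with g(0) = 0 and g(1) = 1 (hence g is non-negative on [0,∞)). Let A and B be n×n positive semidefinite complex matrices with B ≤ I ≤ A (i.e., I − B and A − I are positive semidefinite). Then for every index k, λ_k↓(g(A) − B) ≤ λ_k↓(g(A − B)). -/

import Mathlib

/-!
Put `θ = λ_k↓(A - B)`. A dimension count (Courant–Fischer) gives a unit vector `x` in the span of
the eigenvectors of the `k + 1` largest eigenvalues of `g(A) - B` and of the `n - k` smallest
eigenvalues of `A - B`, so that `λ_k↓(g(A) - B) ≤ ⟨x, g(A) x⟩ - b` and `a - b ≤ θ`, where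
`a = ⟨x, A x⟩ ≥ 1` and `0 ≤ b = ⟨x, B x⟩ ≤ a`. Jensen's inequality for the spectral measure of `A`
at `x` gives `⟨x, g(A) x⟩ ≤ g(a)`. A concave `g` with `g 0 = 0` and `g 1 = 1` has secant slopes at
most `1` on every interval `[u, v] ⊆ [0, ∞)` with `v ≥ 1`, hence `g(a) - b ≤ g(a - b) ≤ g(θ)`.
Finally `g(θ) ≤ λ_k↓(g(A - B))`, since `g(A - B)` has the eigenvalues `g(λ_i(A - B))` on the
same eigenvectors and `g` is monotone.
-/

open Matrix
open scoped ComplexOrder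

/-- The eigenvalues of a square matrix, sorted in non-increasing order
(junk value `0` if the matrix is not Hermitian). -/
noncomputable def eigValsDown {𝕜 : Type*} [RCLike 𝕜] {n : ℕ}
    (A : Matrix (Fin n) (Fin n) 𝕜) : Fin n → ℝ :=
  if hA : A.IsHermitian then
    fun k => (hA.eigenvalues ∘ Tuple.sort hA.eigenvalues) k.rev
  else 0

/-- Functional calculus: apply a real function to a Hermitian matrix via its spectral
decomposition (junk value `0` if the matrix is not Hermitian). -/
noncomputable def matFun {𝕜 : Type*} [RCLike 𝕜] {n : ℕ} (h : ℝ → ℝ)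
    (A : Matrix (Fin n) (Fin n) 𝕜) : Matrix (Fin n) (Fin n) 𝕜 :=
  if hA : A.IsHermitian then
    (hA.eigenvectorUnitary : Matrix (Fin n) (Fin n) 𝕜) *
      Matrix.diagonal (fun i => (h (hA.eigenvalues i) : 𝕜)) *
      star (hA.eigenvectorUnitary : Matrix (Fin n) (Fin n) 𝕜)
  else 0

/-- The operator norm (largest singular value) of a matrix. -/
noncomputable def opNorm {𝕜 : Type*} [RCLike 𝕜] {n : ℕ}
    (A : Matrix (Fin n) (Fin n) 𝕜) : ℝ :=
  ‖Matrix.toEuclideanCLM (𝕜 := 𝕜) A‖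

/-- The matrix absolute value `|M| = (Mᴴ M)^(1/2)`. -/
noncomputable def matAbs {𝕜 : Type*} [RCLike 𝕜] {n : ℕ}
    (A : Matrix (Fin n) (Fin n) 𝕜) : Matrix (Fin n) (Fin n) 𝕜 :=
  (Matrix.posSemidef_conjTranspose_mul_self A).1.eigenvectorUnitary.1 *
    Matrix.diagonal ((↑) ∘ Real.sqrt ∘ (Matrix.posSemidef_conjTranspose_mul_self A).1.eigenvalues) *
    (star (Matrix.posSemidef_conjTranspose_mul_self A).1.eigenvectorUnitary : Matrix (Fin n) (Fin n) 𝕜)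

/-- The Ky Fan `k`-norm: the sum of the `k` largest singular values. -/
noncomputable def kyFanNorm {𝕜 : Type*} [RCLike 𝕜] {n : ℕ} (k : ℕ)
    (A : Matrix (Fin n) (Fin n) 𝕜) : ℝ :=
  ∑ j ∈ Finset.univ.filter (fun j : Fin n => (j : ℕ) < k), eigValsDown (matAbs A) j

lemma ConcaveOn.mul_le_apply_mul {g : ℝ → ℝ} (hg : ConcaveOn ℝ (Set.Ici 0) g) (hg0 : g 0 = 0)
    {t x : ℝ} (ht₀ : 0 ≤ t) (ht₁ : t ≤ 1) (hx : 0 ≤ x) : t * g x ≤ g (t * x) := by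
  have := hg.2 (Set.mem_Ici.2 hx) (Set.mem_Ici.2 le_rfl) ht₀ (sub_nonneg.2 ht₁) (by ring)
  simpa [hg0] using this

lemma ConcaveOn.sub_le_sub_of_one_le {g : ℝ → ℝ} (hg : ConcaveOn ℝ (Set.Ici 0) g)
    (hg0 : g 0 = 0) (hg1 : g 1 = 1) {u v : ℝ} (hu : 0 ≤ u) (huv : u ≤ v) (hv : 1 ≤ v) :
    g v - g u ≤ v - u := by
  have hv₀ : 0 < v := by linarith
  have hgu : u / v * g v ≤ g u := by
    simpa [div_mul_cancel₀ u hv₀.ne'] using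
      hg.mul_le_apply_mul hg0 (div_nonneg hu hv₀.le) ((div_le_one hv₀).2 huv) hv₀.le
  have hgv : g v ≤ v := by
    have := hg.mul_le_apply_mul hg0 (inv_nonneg.2 hv₀.le) (inv_le_one_of_one_le₀ hv) hv₀.le
    rw [inv_mul_cancel₀ hv₀.ne', hg1, inv_mul_le_iff₀ hv₀, mul_one] at this
    exact this
  calc g v - g u ≤ (v - u) / v * g v := by
        rw [sub_div, div_self hv₀.ne', sub_mul, one_mul]; linarith
    _ ≤ (v - u) / v * v := by gcongr
    _ = v - u := div_mul_cancel₀ _ hv₀.ne'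

section WeightedAverage

variable {ι : Type*} [Fintype ι] {w d : ι → ℝ} {S : Finset ι} {c : ℝ}

lemma le_sum_mul_of_le_on_support (hw₀ : ∀ i, 0 ≤ w i) (hw₁ : ∑ i, w i = 1)
    (hwS : ∀ i ∉ S, w i = 0) (hd : ∀ i ∈ S, c ≤ d i) : c ≤ ∑ i, d i * w i := by
  calc c = ∑ i, c * w i := by rw [← Finset.mul_sum, hw₁, mul_one]
    _ ≤ ∑ i, d i * w i := Finset.sum_le_sum fun i _ => by
        by_cases hi : i ∈ S
        · exact mul_le_mul_of_nonneg_right (hd i hi) (hw₀ i)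
        · simp [hwS i hi]

lemma sum_mul_le_of_le_on_support (hw₀ : ∀ i, 0 ≤ w i) (hw₁ : ∑ i, w i = 1)
    (hwS : ∀ i ∉ S, w i = 0) (hd : ∀ i ∈ S, d i ≤ c) : ∑ i, d i * w i ≤ c := by
  calc ∑ i, d i * w i ≤ ∑ i, c * w i := Finset.sum_le_sum fun i _ => by
        by_cases hi : i ∈ S
        · exact mul_le_mul_of_nonneg_right (hd i hi) (hw₀ i)
        · simp [hwS i hi]
    _ = c := by rw [← Finset.mul_sum, hw₁, mul_one]

end WeightedAverage

section Vectors

variable {𝕜 m : Type*} [RCLike 𝕜] [Fintype m]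

lemma star_dotProduct_self_eq_sum_norm_sq (x : m → 𝕜) :
    star x ⬝ᵥ x = ((∑ i, ‖x i‖ ^ 2 : ℝ) : 𝕜) := by
  simp [dotProduct, RCLike.conj_mul]

lemma re_dotProduct_sub_mulVec (P Q : Matrix m m 𝕜) (x : m → 𝕜) :
    RCLike.re (star x ⬝ᵥ (P - Q) *ᵥ x) =
      RCLike.re (star x ⬝ᵥ P *ᵥ x) - RCLike.re (star x ⬝ᵥ Q *ᵥ x) := by
  rw [sub_mulVec, dotProduct_sub, map_sub]

lemma re_dotProduct_conj_diagonal [DecidableEq m] (U : Matrix m m 𝕜) (d : m → ℝ) (x : m → 𝕜) :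
    RCLike.re (star x ⬝ᵥ (U * diagonal (RCLike.ofReal ∘ d) * star U) *ᵥ x) =
      ∑ i, d i * ‖(star U *ᵥ x) i‖ ^ 2 := by
  have hstar : star x ᵥ* U = star (star U *ᵥ x) := by
    rw [star_mulVec, star_eq_conjTranspose, conjTranspose_conjTranspose]
  rw [← mulVec_mulVec, ← mulVec_mulVec, dotProduct_mulVec, hstar]
  simp [dotProduct, mulVec_diagonal, mul_left_comm _ (d _ : 𝕜), RCLike.conj_mul]

lemma sum_norm_sq_star_unitary_mulVec [DecidableEq m] (U : unitaryGroup m 𝕜) (x : m → 𝕜) :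
    ∑ i, ‖(star (U : Matrix m m 𝕜) *ᵥ x) i‖ ^ 2 = RCLike.re (star x ⬝ᵥ x) := by
  simpa using (re_dotProduct_conj_diagonal (U : Matrix m m 𝕜) 1 x).symm

lemma Submodule.exists_star_dotProduct_self_eq_one {W : Submodule 𝕜 (m → 𝕜)} (hW : W ≠ ⊥) :
    ∃ x ∈ W, star x ⬝ᵥ x = 1 := by
  obtain ⟨x, hxW, hx⟩ := W.exists_mem_ne_zero_of_ne_bot hW
  set s := ∑ i, ‖x i‖ ^ 2
  have hs : 0 < s := by
    obtain ⟨i, hi⟩ := Function.ne_iff.1 hx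
    exact Finset.sum_pos' (fun j _ => by positivity) ⟨i, Finset.mem_univ i, by positivity⟩
  refine ⟨((√s)⁻¹ : 𝕜) • x, W.smul_mem _ hxW, ?_⟩
  rw [star_smul, smul_dotProduct, dotProduct_smul, star_dotProduct_self_eq_sum_norm_sq,
    smul_eq_mul, smul_eq_mul, RCLike.star_def, map_inv₀, RCLike.conj_ofReal, ← mul_assoc]
  norm_cast
  rw [← sq, inv_pow, Real.sq_sqrt hs.le, inv_mul_cancel₀ hs.ne']

lemma exists_unit_mulVec_eq_zero_off [DecidableEq m] (U V : Matrix m m 𝕜) (I J : Finset m)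
    (h : Fintype.card m < I.card + J.card) :
    ∃ x, star x ⬝ᵥ x = 1 ∧ (∀ i ∉ I, (U *ᵥ x) i = 0) ∧ ∀ j ∉ J, (V *ᵥ x) j = 0 := by
  let L : (m → 𝕜) →ₗ[𝕜] ((↥Iᶜ → 𝕜) × (↥Jᶜ → 𝕜)) :=
    (LinearMap.pi fun i : ↥Iᶜ => (LinearMap.proj (i : m)).comp U.mulVecLin).prod
      (LinearMap.pi fun j : ↥Jᶜ => (LinearMap.proj (j : m)).comp V.mulVecLin)
  have hL : LinearMap.ker L ≠ ⊥ := by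
    apply LinearMap.ker_ne_bot_of_finrank_lt
    simp only [Module.finrank_prod, Module.finrank_pi, Fintype.card_coe, Finset.card_compl]
    have := I.card_le_univ
    have := J.card_le_univ
    omega
  obtain ⟨x, hxL, hx⟩ := Submodule.exists_star_dotProduct_self_eq_one hL
  refine ⟨x, hx, fun i hi => ?_, fun j hj => ?_⟩
  · exact congr_fun (congr_arg Prod.fst hxL) ⟨i, Finset.mem_compl.2 hi⟩
  · exact congr_fun (congr_arg Prod.snd hxL) ⟨j, Finset.mem_compl.2 hj⟩

end Vectors

lemma isHermitian_matFun {𝕜 : Type*} [RCLike 𝕜] {n : ℕ} (f : ℝ → ℝ)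
    (P : Matrix (Fin n) (Fin n) 𝕜) : (matFun f P).IsHermitian := by
  by_cases hP : P.IsHermitian
  · rw [matFun, dif_pos hP, star_eq_conjTranspose]
    refine isHermitian_mul_mul_conjTranspose _ ?_
    simp [IsHermitian, diagonal_conjTranspose]
  · rw [matFun, dif_neg hP]
    exact isHermitian_zero

namespace Matrix.IsHermitian

section Spectral

variable {𝕜 m : Type*} [RCLike 𝕜] [Fintype m] [DecidableEq m] {P : Matrix m m 𝕜}

noncomputable def eigenWeight (hP : P.IsHermitian) (x : m → 𝕜) (i : m) : ℝ :=
  ‖(star (hP.eigenvectorUnitary : Matrix m m 𝕜) *ᵥ x) i‖ ^ 2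

lemma eigenWeight_nonneg (hP : P.IsHermitian) (x : m → 𝕜) (i : m) : 0 ≤ hP.eigenWeight x i := by
  unfold eigenWeight; positivity

lemma sum_eigenWeight (hP : P.IsHermitian) {x : m → 𝕜} (hx : star x ⬝ᵥ x = 1) :
    ∑ i, hP.eigenWeight x i = 1 := by
  simp [eigenWeight, sum_norm_sq_star_unitary_mulVec, hx]

lemma re_dotProduct_mulVec_eq (hP : P.IsHermitian) (x : m → 𝕜) :
    RCLike.re (star x ⬝ᵥ P *ᵥ x) = ∑ i, hP.eigenvalues i * hP.eigenWeight x i := by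
  conv_lhs => rw [hP.spectral_theorem]
  exact re_dotProduct_conj_diagonal _ _ x

end Spectral

section SortedSpectrum

variable {𝕜 : Type*} [RCLike 𝕜] {n : ℕ} {P : Matrix (Fin n) (Fin n) 𝕜}

lemma eigValsDown_eq (hP : P.IsHermitian) (k : Fin n) :
    eigValsDown P k = hP.eigenvalues (Tuple.sort hP.eigenvalues k.rev) := by
  rw [eigValsDown, dif_pos hP]; rfl

lemma matFun_eq (hP : P.IsHermitian) (f : ℝ → ℝ) :
    matFun f P = (hP.eigenvectorUnitary : Matrix (Fin n) (Fin n) 𝕜) *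
      diagonal (RCLike.ofReal ∘ f ∘ hP.eigenvalues) *
      star (hP.eigenvectorUnitary : Matrix (Fin n) (Fin n) 𝕜) := by
  rw [matFun, dif_pos hP]; rfl

lemma re_dotProduct_matFun_eq (hP : P.IsHermitian) (f : ℝ → ℝ) (x : Fin n → 𝕜) :
    RCLike.re (star x ⬝ᵥ matFun f P *ᵥ x) =
      ∑ i, f (hP.eigenvalues i) * hP.eigenWeight x i := by
  rw [hP.matFun_eq f]
  exact re_dotProduct_conj_diagonal _ _ x

noncomputable def topEigenIndices (hP : P.IsHermitian) (k : Fin n) : Finset (Fin n) :=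
  (Finset.Ici k.rev).map (Tuple.sort hP.eigenvalues).toEmbedding

noncomputable def bottomEigenIndices (hP : P.IsHermitian) (k : Fin n) : Finset (Fin n) :=
  (Finset.Iic k.rev).map (Tuple.sort hP.eigenvalues).toEmbedding

lemma eigValsDown_le_of_mem_topEigenIndices (hP : P.IsHermitian) {k i : Fin n}
    (hi : i ∈ hP.topEigenIndices k) : eigValsDown P k ≤ hP.eigenvalues i := by
  obtain ⟨j, hj, rfl⟩ := Finset.mem_map.1 hi
  rw [hP.eigValsDown_eq]
  exact Tuple.monotone_sort hP.eigenvalues (Finset.mem_Ici.1 hj)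

lemma le_eigValsDown_of_mem_bottomEigenIndices (hP : P.IsHermitian) {k i : Fin n}
    (hi : i ∈ hP.bottomEigenIndices k) : hP.eigenvalues i ≤ eigValsDown P k := by
  obtain ⟨j, hj, rfl⟩ := Finset.mem_map.1 hi
  rw [hP.eigValsDown_eq]
  exact Tuple.monotone_sort hP.eigenvalues (Finset.mem_Iic.1 hj)

variable {M N : Matrix (Fin n) (Fin n) 𝕜}

lemma card_topEigenIndices_add_card_bottomEigenIndices (hM : M.IsHermitian) (hN : N.IsHermitian)
    (k : Fin n) : (hM.topEigenIndices k).card + (hN.bottomEigenIndices k).card = n + 1 := by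
  simp only [topEigenIndices, bottomEigenIndices, Finset.card_map, Fin.card_Ici, Fin.card_Iic]
  omega

/-- The span of the eigenvectors of the `k + 1` largest eigenvalues of `M` meets that of the
`n - k` smallest eigenvalues of `N`, by a dimension count. -/
lemma exists_unit_eigenWeight_eq_zero_off (hM : M.IsHermitian) (hN : N.IsHermitian) (k : Fin n) :
    ∃ x, star x ⬝ᵥ x = 1 ∧ (∀ i ∉ hM.topEigenIndices k, hM.eigenWeight x i = 0) ∧
      ∀ i ∉ hN.bottomEigenIndices k, hN.eigenWeight x i = 0 := by
  obtain ⟨x, hx, hxM, hxN⟩ := exists_unit_mulVec_eq_zero_off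
    (star (hM.eigenvectorUnitary : Matrix (Fin n) (Fin n) 𝕜))
    (star (hN.eigenvectorUnitary : Matrix (Fin n) (Fin n) 𝕜)) _ _
    (by rw [card_topEigenIndices_add_card_bottomEigenIndices hM hN k, Fintype.card_fin]; omega)
  exact ⟨x, hx, fun i hi => by simp [eigenWeight, hxM i hi],
    fun i hi => by simp [eigenWeight, hxN i hi]⟩

lemma eigValsDown_le_re_dotProduct (hP : P.IsHermitian) {k : Fin n} {x : Fin n → 𝕜}
    (hx : star x ⬝ᵥ x = 1) (hxP : ∀ i ∉ hP.topEigenIndices k, hP.eigenWeight x i = 0) :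
    eigValsDown P k ≤ RCLike.re (star x ⬝ᵥ P *ᵥ x) := by
  rw [hP.re_dotProduct_mulVec_eq]
  exact le_sum_mul_of_le_on_support (hP.eigenWeight_nonneg x) (hP.sum_eigenWeight hx) hxP
    fun i hi => hP.eigValsDown_le_of_mem_topEigenIndices hi

lemma re_dotProduct_le_eigValsDown (hP : P.IsHermitian) {k : Fin n} {x : Fin n → 𝕜}
    (hx : star x ⬝ᵥ x = 1) (hxP : ∀ i ∉ hP.bottomEigenIndices k, hP.eigenWeight x i = 0) :
    RCLike.re (star x ⬝ᵥ P *ᵥ x) ≤ eigValsDown P k := by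
  rw [hP.re_dotProduct_mulVec_eq]
  exact sum_mul_le_of_le_on_support (hP.eigenWeight_nonneg x) (hP.sum_eigenWeight hx) hxP
    fun i hi => hP.le_eigValsDown_of_mem_bottomEigenIndices hi

lemma apply_eigValsDown_le_eigValsDown_matFun (hP : P.IsHermitian) {f : ℝ → ℝ} {s : Set ℝ}
    (hf : MonotoneOn f s) (hs : ∀ i, hP.eigenvalues i ∈ s) (k : Fin n) :
    f (eigValsDown P k) ≤ eigValsDown (matFun f P) k := by
  have hfP := isHermitian_matFun f P
  obtain ⟨x, hx, hxP, hxfP⟩ := exists_unit_eigenWeight_eq_zero_off hP hfP k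
  have hθ : eigValsDown P k ∈ s := by rw [hP.eigValsDown_eq]; exact hs _
  calc f (eigValsDown P k) ≤ ∑ i, f (hP.eigenvalues i) * hP.eigenWeight x i :=
        le_sum_mul_of_le_on_support (hP.eigenWeight_nonneg x) (hP.sum_eigenWeight hx) hxP
          fun i hi => hf hθ (hs i) (hP.eigValsDown_le_of_mem_topEigenIndices hi)
    _ = RCLike.re (star x ⬝ᵥ matFun f P *ᵥ x) := (hP.re_dotProduct_matFun_eq f x).symm
    _ ≤ eigValsDown (matFun f P) k := hfP.re_dotProduct_le_eigValsDown hx hxfP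

lemma re_dotProduct_matFun_le (hP : P.IsHermitian) {f : ℝ → ℝ} {s : Set ℝ}
    (hf : ConcaveOn ℝ s f) (hs : ∀ i, hP.eigenvalues i ∈ s) {x : Fin n → 𝕜}
    (hx : star x ⬝ᵥ x = 1) :
    RCLike.re (star x ⬝ᵥ matFun f P *ᵥ x) ≤ f (RCLike.re (star x ⬝ᵥ P *ᵥ x)) := by
  rw [hP.re_dotProduct_matFun_eq, hP.re_dotProduct_mulVec_eq]
  simpa [mul_comm] using hf.le_map_sum (fun i _ => hP.eigenWeight_nonneg x i)
    (hP.sum_eigenWeight hx) fun i _ => hs i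

end SortedSpectrum

end Matrix.IsHermitian

/-- key step in the proof of Proposition `prop:ggc`: for a monotonically
increasing concave `g` on `[0,∞)` with `g 0 = 0` and `g 1 = 1`, and PSD `A, B` with
`B ≤ I ≤ A`, one has `λ_k↓(g(A) - B) ≤ λ_k↓(g(A - B))` for every `k`. -/
theorem stmt15 {n : ℕ} (A B : Matrix (Fin n) (Fin n) ℂ)
    (hA : A.PosSemidef) (hB : B.PosSemidef)
    (hB1 : ((1 : Matrix (Fin n) (Fin n) ℂ) - B).PosSemidef)
    (hA1 : (A - 1).PosSemidef)
    (g : ℝ → ℝ) (hg_mono : MonotoneOn g (Set.Ici (0 : ℝ)))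
    (hg_conc : ConcaveOn ℝ (Set.Ici (0 : ℝ)) g)
    (hg0 : g 0 = 0) (hg1 : g 1 = 1)
    (k : Fin n) :
    eigValsDown (matFun g A - B) k ≤ eigValsDown (matFun g (A - B)) k := by
  have hAB : (A - B).PosSemidef := by simpa using hA1.add hB1
  have hM := (isHermitian_matFun g A).sub hB.1
  obtain ⟨x, hx, hxM, hxAB⟩ := hM.exists_unit_eigenWeight_eq_zero_off hAB.1 k
  set a := RCLike.re (star x ⬝ᵥ A *ᵥ x)
  set b := RCLike.re (star x ⬝ᵥ B *ᵥ x)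
  have ha : 1 ≤ a := by
    have := hA1.re_dotProduct_nonneg x
    rw [re_dotProduct_sub_mulVec, one_mulVec, hx, RCLike.one_re] at this
    linarith
  have hab : 0 ≤ a - b := re_dotProduct_sub_mulVec A B x ▸ hAB.re_dotProduct_nonneg x
  have hθ : a - b ≤ eigValsDown (A - B) k :=
    re_dotProduct_sub_mulVec A B x ▸ hAB.1.re_dotProduct_le_eigValsDown hx hxAB
  calc eigValsDown (matFun g A - B) k
      ≤ RCLike.re (star x ⬝ᵥ matFun g A *ᵥ x) - b :=
        re_dotProduct_sub_mulVec _ B x ▸ hM.eigValsDown_le_re_dotProduct hx hxM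
    _ ≤ g a - b := by
        gcongr
        exact hA.1.re_dotProduct_matFun_le hg_conc hA.eigenvalues_nonneg hx
    _ ≤ g (a - b) := by
        have hb : a - b ≤ a := by linarith [hB.re_dotProduct_nonneg x]
        linarith [hg_conc.sub_le_sub_of_one_le hg0 hg1 hab hb ha]
    _ ≤ g (eigValsDown (A - B) k) := hg_mono hab (hab.trans hθ) hθ
    _ ≤ eigValsDown (matFun g (A - B)) k :=
        hAB.1.apply_eigValsDown_le_eigValsDown_matFun hg_mono hAB.eigenvalues_nonneg k
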